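/- arXiv:2005.04834 — 2 statements merged into one kernel-verified Lean document; each statement's English description precedes it below -/
import Mathlib

section
/- Let Ω be a measurable space, Q₁ and Q₂ probability measures on Ω, and d, k, m natural numbers. Let s₁, s₂ be finite subsets of {1,…,d} with |s₁| = |s₂| = k and min(|s₁ \ s₂|, |s₂ \ s₁|) ≥ 2m. Then for every measurable map ŝ : Ω → Finset(Fin d) satisfying |ŝ(ω)| ≤ k for all ω, one has (1/2)·( Q₁{ω : |s₁ \ ŝ(ω)| ≥ m} + Q₂{ω : |s₂ \ ŝ(ω)| ≥ m} ) ≥ (1/2)·(1 − TV(Q₁, Q₂)); in particular max_{j=1,2} Q_j{ω : |s_j \ ŝ(ω)| ≥ m} ≥ (1/2)·(1 − TV(Q₁, Q₂)). -/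
/-!
Any estimate `t` with `#t ≤ #s₂` misses at least `m` indices of `s₁` or at least `m` indices
of `s₂`, because `s₁ ∪ s₂` has at least `#s₂ + 2m` elements. Hence the event
`{#(s₂ \ ŝ) < m}` is contained in `{#(s₁ \ ŝ) ≥ m}`, so the two failure probabilities are the
type I and type II errors of a test of `Q₁` against `Q₂`, whose sum is at least `1 − TV(Q₁, Q₂)`
(Le Cam).
-/

open MeasureTheory Finset

/-- Total variation distance between two measures:
`TV(P,Q) = sup over measurable sets B of |P(B) − Q(B)|`. -/
noncomputable def tvDist {Ω : Type*} [MeasurableSpace Ω] (P Q : Measure Ω) : ℝ :=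
  ⨆ B : {B : Set Ω // MeasurableSet B}, |(P B).toReal - (Q B).toReal|

lemma Finset.card_sdiff_add_card_le_card_sdiff_add_card_sdiff {α : Type*} [DecidableEq α]
    (s₁ s₂ t : Finset α) : #(s₁ \ s₂) + #s₂ ≤ #(s₁ \ t) + #(s₂ \ t) + #t :=
  calc #(s₁ \ s₂) + #s₂ = #(s₁ ∪ s₂) := card_sdiff_add_card s₁ s₂
    _ ≤ #((s₁ ∪ s₂) \ t) + #t := by have := le_card_sdiff t (s₁ ∪ s₂); omega
    _ ≤ #(s₁ \ t) + #(s₂ \ t) + #t := by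
      rw [union_sdiff_distrib]; gcongr; exact card_union_le _ _

lemma Finset.le_card_sdiff_or_le_card_sdiff {α : Type*} [DecidableEq α] {m : ℕ}
    {s₁ s₂ t : Finset α} (h_sep : 2 * m ≤ #(s₁ \ s₂)) (ht : #t ≤ #s₂) :
    m ≤ #(s₁ \ t) ∨ m ≤ #(s₂ \ t) := by
  have := card_sdiff_add_card_le_card_sdiff_add_card_sdiff s₁ s₂ t
  omega

lemma abs_measureReal_sub_le_tvDist {Ω : Type*} [MeasurableSpace Ω] (P Q : Measure Ω)
    [IsFiniteMeasure P] [IsFiniteMeasure Q] {B : Set Ω} (hB : MeasurableSet B) :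
    |P.real B - Q.real B| ≤ tvDist P Q := by
  refine le_ciSup (f := fun B : {B : Set Ω // MeasurableSet B} => |P.real B - Q.real B|)
    ⟨P.real Set.univ + Q.real Set.univ, ?_⟩ ⟨B, hB⟩
  rintro _ ⟨B, rfl⟩
  calc |P.real B - Q.real B| ≤ |P.real B| + |Q.real B| := abs_sub _ _
    _ = P.real B + Q.real B := by rw [abs_of_nonneg measureReal_nonneg,
        abs_of_nonneg measureReal_nonneg]
    _ ≤ P.real Set.univ + Q.real Set.univ :=
      add_le_add (measureReal_mono (Set.subset_univ _)) (measureReal_mono (Set.subset_univ _))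

lemma one_sub_tvDist_le_measureReal_compl_add {Ω : Type*} [MeasurableSpace Ω]
    (P Q : Measure Ω) [IsProbabilityMeasure P] [IsProbabilityMeasure Q] {A : Set Ω}
    (hA : MeasurableSet A) : 1 - tvDist P Q ≤ P.real Aᶜ + Q.real A := by
  have := (le_abs_self _).trans (abs_measureReal_sub_le_tvDist P Q hA)
  rw [probReal_compl_eq_one_sub hA]
  linarith

theorem support_recovery_two_point_general {Ω : Type*} [MeasurableSpace Ω]
    (Q₁ Q₂ : Measure Ω) [IsProbabilityMeasure Q₁] [IsProbabilityMeasure Q₂]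
    (d k m : ℕ) (s₁ s₂ : Finset (Fin d))
    (h₂ : s₂.card = k)
    (h_sep : 2 * m ≤ min (s₁ \ s₂).card (s₂ \ s₁).card)
    (shat : Ω → Finset (Fin d))
    (h_meas : Measurable[_root_.inferInstance, ⊤] shat)
    (h_size : ∀ ω, (shat ω).card ≤ k) :
    (1 / 2 : ℝ) * ((Q₁ {ω | m ≤ (s₁ \ shat ω).card}).toReal
        + (Q₂ {ω | m ≤ (s₂ \ shat ω).card}).toReal)
      ≥ (1 / 2) * (1 - tvDist Q₁ Q₂) ∧
    max (Q₁ {ω | m ≤ (s₁ \ shat ω).card}).toReal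
        (Q₂ {ω | m ≤ (s₂ \ shat ω).card}).toReal
      ≥ (1 / 2) * (1 - tvDist Q₁ Q₂) := by
  set A₁ : Set Ω := {ω | m ≤ #(s₁ \ shat ω)}
  set A₂ : Set Ω := {ω | m ≤ #(s₂ \ shat ω)}
  have hA₂ : MeasurableSet A₂ :=
    h_meas (t := {t | m ≤ #(s₂ \ t)}) MeasurableSpace.measurableSet_top
  have h_compl : A₂ᶜ ⊆ A₁ := fun ω hω =>
    (le_card_sdiff_or_le_card_sdiff (h_sep.trans (min_le_left _ _))
      ((h_size ω).trans h₂.ge)).resolve_right hω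
  have h_lecam : 1 - tvDist Q₁ Q₂ ≤ Q₁.real A₁ + Q₂.real A₂ :=
    (one_sub_tvDist_le_measureReal_compl_add Q₁ Q₂ hA₂).trans
      (add_le_add (measureReal_mono (μ := Q₁) h_compl) le_rfl)
  constructor
  · change _ ≤ 1 / 2 * (Q₁.real A₁ + Q₂.real A₂)
    linarith
  · change _ ≤ max (Q₁.real A₁) (Q₂.real A₂)
    linarith [le_max_left (Q₁.real A₁) (Q₂.real A₂), le_max_right (Q₁.real A₁) (Q₂.real A₂)]

/-- two-point minimax lower bound for support recovery (the paper's
Lemma 1 combined with Le Cam's inequality). -/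
theorem support_recovery_two_point {Ω : Type*} [MeasurableSpace Ω]
    (Q₁ Q₂ : Measure Ω) [IsProbabilityMeasure Q₁] [IsProbabilityMeasure Q₂]
    (d k m : ℕ) (s₁ s₂ : Finset (Fin d))
    (h₁ : s₁.card = k) (h₂ : s₂.card = k)
    (h_sep : 2 * m ≤ min (s₁ \ s₂).card (s₂ \ s₁).card)
    (shat : Ω → Finset (Fin d))
    (h_meas : Measurable[_root_.inferInstance, ⊤] shat)
    (h_size : ∀ ω, (shat ω).card ≤ k) :
    (1 / 2 : ℝ) * ((Q₁ {ω | m ≤ (s₁ \ shat ω).card}).toReal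
        + (Q₂ {ω | m ≤ (s₂ \ shat ω).card}).toReal)
      ≥ (1 / 2) * (1 - tvDist Q₁ Q₂) ∧
    max (Q₁ {ω | m ≤ (s₁ \ shat ω).card}).toReal
        (Q₂ {ω | m ≤ (s₂ \ shat ω).card}).toReal
      ≥ (1 / 2) * (1 - tvDist Q₁ Q₂) :=
  support_recovery_two_point_general Q₁ Q₂ d k m s₁ s₂ h₂ h_sep shat h_meas h_size
end

section
/- Let d, k, m, n be natural numbers, σ > 0, μ a probability measure on ℝ^d, and f₁, f₂ : ℝ^d → ℝ measurable functions with ∫ (f₁ − f₂)² dμ < ∞. Let s₁, s₂ be finite subsets of {1,…,d} with |s₁| = |s₂| = k and min(|s₁ \ s₂|, |s₂ \ s₁|) ≥ 2m, and assume f_j depends only on coordinates in s_j for j = 1, 2. For j = 1, 2 let P_j be the probability measure on ℝ^d × ℝ with X ~ μ and Y | X = x ~ N(f_j(x), σ²), and let Q_j = P_j^{⊗n} be the law of n i.i.d. observations. Then for every measurable support estimator ŝ : (ℝ^d × ℝ)^n → Finset(Fin d) with |ŝ(data)| ≤ k for all data, max_{j=1,2} Q_j{ |s_j \ ŝ| ≥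 m } ≥ (1/2)·( 1 − sqrt( (n/(4σ²)) · ∫ (f₁ − f₂)² dμ ) ). -/
/-!
Le Cam's two-point method. Since `|s₂ \ s₁| ≤ |s₁ \ ŝ| + |s₂ \ ŝ|` whenever `|ŝ| ≤ |s₁|`, the
events `A_j = {|s_j \ ŝ| ≥ m}` cover the sample space, so `Q₁ A₁ + Q₂ A₂ ≥ ∫ min(q₁, q₂)` for the
densities `q_j` of `Q_j`. This overlap is controlled by the Hellinger affinity `ρ = ∫ √(q₁ q₂)`:
by Cauchy–Schwarz `ρ² ≤ ∫ min · ∫ max = ∫ min · (2 - ∫ min)`, i.e. `1 - ∫ min ≤ √(1 - ρ²)`.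
The affinity is multiplicative over i.i.d. samples, and for a single observation of the two
regression laws it equals `r = ∫ exp(-(f₁ - f₂)² / (8σ²)) dμ ≥ 1 - ∫ (f₁ - f₂)² dμ / (8σ²)`;
Bernoulli's inequality then gives `1 - r^(2n) ≤ n ∫ (f₁ - f₂)² dμ / (4σ²)`.
-/

open MeasureTheory ProbabilityTheory
open scoped ENNReal NNReal

/-- `f` depends only on the coordinates in `s`. -/
def DependsOnlyOn {d : ℕ} (f : (Fin d → ℝ) → ℝ) (s : Finset (Fin d)) : Prop :=
  ∀ x x' : Fin d → ℝ, (∀ i ∈ s, x i = x' i) → f x = f x'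

/-- The joint law on `ℝ^d × ℝ` of `(X, Y)` where `X ~ μ` and `Y = f(X) + ε`
with `ε ~ N(0, σ²)` independent of `X`; i.e. `Y | X = x ~ N(f(x), σ²)`. -/
noncomputable def gaussianRegressionLaw {d : ℕ}
    (μ : Measure (Fin d → ℝ)) (f : (Fin d → ℝ) → ℝ) (σ : ℝ) :
    Measure ((Fin d → ℝ) × ℝ) :=
  Measure.map (fun p : (Fin d → ℝ) × ℝ => (p.1, f p.1 + p.2))
    (μ.prod (gaussianReal 0 ⟨σ ^ 2, sq_nonneg σ⟩))

section HellingerAffinity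

variable {α : Type*} [MeasurableSpace α] {ν : Measure α} {p q : α → ℝ≥0∞}

noncomputable def hellingerAffinity (ν : Measure α) (p q : α → ℝ≥0∞) : ℝ≥0∞ :=
  ∫⁻ x, (p x * q x) ^ (1 / 2 : ℝ) ∂ν

theorem hellingerAffinity_le_sqrt_mul (hp : AEMeasurable p ν) (hq : AEMeasurable q ν) :
    hellingerAffinity ν p q ≤
      (∫⁻ x, min (p x) (q x) ∂ν) ^ (1 / 2 : ℝ) * (∫⁻ x, max (p x) (q x) ∂ν) ^ (1 / 2 : ℝ) := by
  have hsqrt_sq (g : α → ℝ≥0∞) : ∫⁻ x, (g x ^ (1 / 2 : ℝ)) ^ (2 : ℝ) ∂ν = ∫⁻ x, g x ∂ν :=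
    lintegral_congr fun x => by rw [← ENNReal.rpow_mul]; norm_num
  have hsplit : ∀ x, (p x * q x) ^ (1 / 2 : ℝ) =
      min (p x) (q x) ^ (1 / 2 : ℝ) * max (p x) (q x) ^ (1 / 2 : ℝ) := fun x => by
    rw [← ENNReal.mul_rpow_of_nonneg _ _ (by norm_num), min_mul_max]
  rw [hellingerAffinity, lintegral_congr hsplit]
  calc _ ≤ (∫⁻ x, (min (p x) (q x) ^ (1 / 2 : ℝ)) ^ (2 : ℝ) ∂ν) ^ (1 / 2 : ℝ) *
        (∫⁻ x, (max (p x) (q x) ^ (1 / 2 : ℝ)) ^ (2 : ℝ) ∂ν) ^ (1 / 2 : ℝ) :=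
      ENNReal.lintegral_mul_le_Lp_mul_Lq ν Real.HolderConjugate.two_two
        ((hp.min hq).pow_const _) ((hp.max hq).pow_const _)
    _ = _ := by rw [hsqrt_sq, hsqrt_sq]

theorem one_sub_lintegral_min_le (hp : AEMeasurable p ν) (hq : AEMeasurable q ν)
    (hp1 : ∫⁻ x, p x ∂ν = 1) (hq1 : ∫⁻ x, q x ∂ν = 1) :
    1 - (∫⁻ x, min (p x) (q x) ∂ν).toReal ≤ √(1 - (hellingerAffinity ν p q).toReal ^ 2) := by
  set a := ∫⁻ x, min (p x) (q x) ∂ν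
  set b := ∫⁻ x, max (p x) (q x) ∂ν
  have hab : a + b = 2 := by
    rw [← lintegral_add_left' (hp.min hq), lintegral_congr fun x => min_add_max (p x) (q x),
      lintegral_add_left' hp, hp1, hq1, one_add_one_eq_two]
  have ha : a ≤ 1 := hp1 ▸ lintegral_mono fun x => min_le_left _ _
  have ha_top : a ≠ ⊤ := ne_top_of_le_ne_top ENNReal.one_ne_top ha
  have hb_top : b ≠ ⊤ := ne_top_of_le_ne_top ENNReal.ofNat_ne_top (hab ▸ le_add_self)
  have hab' : a.toReal + b.toReal = 2 := by
    rw [← ENNReal.toReal_add ha_top hb_top, hab]; rfl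
  have ha' : a.toReal ≤ 1 := ENNReal.toReal_le_of_le_ofReal zero_le_one (by simpa using ha)
  have hρ : (hellingerAffinity ν p q).toReal ≤ √a.toReal * √b.toReal := by
    rw [Real.sqrt_eq_rpow, Real.sqrt_eq_rpow, ENNReal.toReal_rpow, ENNReal.toReal_rpow,
      ← ENNReal.toReal_mul]
    exact ENNReal.toReal_mono (by finiteness) (hellingerAffinity_le_sqrt_mul hp hq)
  have hρ2 : (hellingerAffinity ν p q).toReal ^ 2 ≤ a.toReal * b.toReal := by
    calc _ ≤ (√a.toReal * √b.toReal) ^ 2 := pow_le_pow_left₀ ENNReal.toReal_nonneg hρ 2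
      _ = a.toReal * b.toReal := by
        rw [mul_pow, Real.sq_sqrt ENNReal.toReal_nonneg, Real.sq_sqrt ENNReal.toReal_nonneg]
  calc 1 - a.toReal = √((1 - a.toReal) ^ 2) := (Real.sqrt_sq (by linarith)).symm
    _ ≤ _ := Real.sqrt_le_sqrt (by nlinarith)

theorem lintegral_min_le_withDensity_add {A B : Set α} (hA : MeasurableSet A)
    (hB : MeasurableSet B) (hAB : A ∪ B = Set.univ) :
    ∫⁻ x, min (p x) (q x) ∂ν ≤ ν.withDensity p A + ν.withDensity q B := by
  rw [withDensity_apply p hA, withDensity_apply q hB, ← setLIntegral_univ, ← hAB]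
  calc _ ≤ ∫⁻ x in A, min (p x) (q x) ∂ν + ∫⁻ x in B, min (p x) (q x) ∂ν :=
        lintegral_union_le _ A B
    _ ≤ _ := add_le_add (lintegral_mono fun x => min_le_left _ _)
        (lintegral_mono fun x => min_le_right _ _)

theorem one_sub_sqrt_le_withDensity_add (hp : AEMeasurable p ν) (hq : AEMeasurable q ν)
    (hp1 : ∫⁻ x, p x ∂ν = 1) (hq1 : ∫⁻ x, q x ∂ν = 1) {A B : Set α} (hA : MeasurableSet A)
    (hB : MeasurableSet B) (hAB : A ∪ B = Set.univ) :
    1 - √(1 - (hellingerAffinity ν p q).toReal ^ 2) ≤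
      (ν.withDensity p A).toReal + (ν.withDensity q B).toReal := by
  have : IsFiniteMeasure (ν.withDensity p) := isFiniteMeasure_withDensity (by simp [hp1])
  have : IsFiniteMeasure (ν.withDensity q) := isFiniteMeasure_withDensity (by simp [hq1])
  have hmin := ENNReal.toReal_mono (by finiteness)
    (lintegral_min_le_withDensity_add (ν := ν) (p := p) (q := q) hA hB hAB)
  rw [ENNReal.toReal_add (measure_ne_top _ _) (measure_ne_top _ _)] at hmin
  linarith [one_sub_lintegral_min_le hp hq hp1 hq1]

end HellingerAffinity

section FiniteProduct

variable {n : ℕ} {α : Type*} [MeasurableSpace α] {μ : Fin n → Measure α} [∀ i, SigmaFinite (μ i)]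

theorem lintegral_fin_nat_prod_eq_prod {f : Fin n → α → ℝ≥0∞} (hf : ∀ i, Measurable (f i)) :
    ∫⁻ x, ∏ i, f i (x i) ∂Measure.pi μ = ∏ i, ∫⁻ x, f i x ∂μ i := by
  induction n with
  | zero => simp
  | succ n ih =>
    have hsplit : Measurable fun y : α × (Fin n → α) => f 0 y.1 * ∏ i : Fin n, f i.succ (y.2 i) :=
      ((hf 0).comp measurable_fst).mul <| Finset.measurable_prod _ fun i _ =>
        (hf i.succ).comp ((measurable_pi_apply i).comp measurable_snd)
    calc _ = ∫⁻ x, (fun y : α × (Fin n → α) => f 0 y.1 * ∏ i : Fin n, f i.succ (y.2 i))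
            (MeasurableEquiv.piFinSuccAbove (fun _ => α) 0 x) ∂Measure.pi μ := by
          simp_rw [MeasurableEquiv.piFinSuccAbove_apply, Fin.prod_univ_succ]; rfl
      _ = ∫⁻ y, f 0 y.1 * ∏ i : Fin n, f i.succ (y.2 i)
            ∂(μ 0).prod (Measure.pi fun i => μ i.succ) :=
          (measurePreserving_piFinSuccAbove μ 0).lintegral_comp hsplit
      _ = (∫⁻ x, f 0 x ∂μ 0) * ∏ i : Fin n, ∫⁻ x, f i.succ x ∂μ i.succ := by
          rw [← ih fun i => hf i.succ]
          exact lintegral_prod_mul (μ := μ 0) (ν := Measure.pi fun i : Fin n => μ i.succ)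
            (g := fun y : Fin n → α => ∏ i, f i.succ (y i)) (hf 0).aemeasurable
            (Finset.measurable_prod _ fun i _ =>
              (hf i.succ).comp (measurable_pi_apply i)).aemeasurable
      _ = _ := (Fin.prod_univ_succ fun i => ∫⁻ x, f i x ∂μ i).symm

theorem MeasureTheory.Measure.pi_withDensity {f : Fin n → α → ℝ≥0∞} (hf : ∀ i, Measurable (f i))
    [∀ i, SigmaFinite ((μ i).withDensity (f i))] :
    Measure.pi (fun i => (μ i).withDensity (f i)) =
      (Measure.pi μ).withDensity fun x => ∏ i, f i (x i) := by
  refine Measure.pi_eq fun s hs => ?_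
  rw [withDensity_apply _ (MeasurableSet.univ_pi hs), Measure.restrict_pi_pi,
    lintegral_fin_nat_prod_eq_prod hf]
  exact Finset.prod_congr rfl fun i _ => (withDensity_apply _ (hs i)).symm

theorem hellingerAffinity_pi {p q : Fin n → α → ℝ≥0∞} (hp : ∀ i, Measurable (p i))
    (hq : ∀ i, Measurable (q i)) :
    hellingerAffinity (Measure.pi μ) (fun x => ∏ i, p i (x i)) (fun x => ∏ i, q i (x i)) =
      ∏ i, hellingerAffinity (μ i) (p i) (q i) := by
  have hsplit : ∀ x : Fin n → α, ((∏ i, p i (x i)) * ∏ i, q i (x i)) ^ (1 / 2 : ℝ) =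
      ∏ i, (p i (x i) * q i (x i)) ^ (1 / 2 : ℝ) := fun x => by
    rw [← Finset.prod_mul_distrib, ENNReal.prod_rpow_of_nonneg (by norm_num)]
  rw [hellingerAffinity, lintegral_congr hsplit,
    lintegral_fin_nat_prod_eq_prod (f := fun i x => (p i x * q i x) ^ (1 / 2 : ℝ))
      fun i => ((hp i).mul (hq i)).pow_const _]
  rfl

end FiniteProduct

theorem one_sub_sqrt_le_pi_withDensity_add {α : Type*} [MeasurableSpace α] {ν : Measure α}
    [SigmaFinite ν] {p q : α → ℝ≥0∞} (hp : Measurable p) (hq : Measurable q)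
    (hp1 : ∫⁻ x, p x ∂ν = 1) (hq1 : ∫⁻ x, q x ∂ν = 1) {n : ℕ} {A B : Set (Fin n → α)}
    (hA : MeasurableSet A) (hB : MeasurableSet B) (hAB : A ∪ B = Set.univ) :
    1 - √(1 - (hellingerAffinity ν p q).toReal ^ (2 * n)) ≤
      (Measure.pi (fun _ => ν.withDensity p) A).toReal +
        (Measure.pi (fun _ => ν.withDensity q) B).toReal := by
  have : IsFiniteMeasure (ν.withDensity p) := isFiniteMeasure_withDensity (by simp [hp1])
  have : IsFiniteMeasure (ν.withDensity q) := isFiniteMeasure_withDensity (by simp [hq1])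
  have hprod_meas {g : α → ℝ≥0∞} (hg : Measurable g) :
      Measurable fun x : Fin n → α => ∏ i, g (x i) :=
    Finset.measurable_prod _ fun i _ => hg.comp (measurable_pi_apply i)
  have hprod_one {g : α → ℝ≥0∞} (hg : Measurable g) (hg1 : ∫⁻ x, g x ∂ν = 1) :
      ∫⁻ x : Fin n → α, ∏ i, g (x i) ∂(Measure.pi fun _ => ν) = 1 := by
    rw [lintegral_fin_nat_prod_eq_prod fun _ => hg, hg1, Finset.prod_const_one]
  have haff : (hellingerAffinity ν p q).toReal ^ (2 * n) =
      (hellingerAffinity (Measure.pi fun _ : Fin n => ν) (fun x => ∏ i, p (x i))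
        (fun x => ∏ i, q (x i))).toReal ^ 2 := by
    rw [hellingerAffinity_pi (fun _ => hp) fun _ => hq, Fin.prod_const, ENNReal.toReal_pow,
      pow_mul']
  rw [Measure.pi_withDensity fun _ => hp, Measure.pi_withDensity fun _ => hq, haff]
  exact one_sub_sqrt_le_withDensity_add (hprod_meas hp).aemeasurable (hprod_meas hq).aemeasurable
    (hprod_one hp hp1) (hprod_one hq hq1) hA hB hAB

open Real in
theorem gaussianPDFReal_mul_gaussianPDFReal (a b y : ℝ) {v : ℝ≥0} (hv : v ≠ 0) :
    gaussianPDFReal a v y * gaussianPDFReal b v y =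
      (exp (-((a - b) ^ 2 / (8 * v))) * gaussianPDFReal ((a + b) / 2) v y) ^ 2 := by
  have hv' : (v : ℝ) ≠ 0 := by exact_mod_cast hv
  have hexp : exp (-(y - a) ^ 2 / (2 * v)) * exp (-(y - b) ^ 2 / (2 * v)) =
      exp (-((a - b) ^ 2 / (8 * v))) ^ 2 * exp (-(y - (a + b) / 2) ^ 2 / (2 * v)) ^ 2 := by
    simp only [sq (exp _), ← exp_add]
    congr 1
    field_simp
    ring
  simp only [gaussianPDFReal]
  linear_combination (√(2 * π * v))⁻¹ ^ 2 * hexp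

theorem gaussianPDF_mul_gaussianPDF_rpow_half (a b y : ℝ) {v : ℝ≥0} (hv : v ≠ 0) :
    (gaussianPDF a v y * gaussianPDF b v y) ^ (1 / 2 : ℝ) =
      ENNReal.ofReal (Real.exp (-((a - b) ^ 2 / (8 * v)))) * gaussianPDF ((a + b) / 2) v y := by
  rw [gaussianPDF, gaussianPDF, gaussianPDF, ← ENNReal.ofReal_mul (gaussianPDFReal_nonneg _ _ _),
    gaussianPDFReal_mul_gaussianPDFReal a b y hv, ← ENNReal.ofReal_mul (Real.exp_nonneg _),
    ENNReal.ofReal_pow (mul_nonneg (Real.exp_nonneg _) (gaussianPDFReal_nonneg _ _ _)),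
    ← ENNReal.rpow_natCast, ← ENNReal.rpow_mul]
  norm_num

theorem lintegral_gaussianPDF_mul_gaussianPDF_rpow_half (a b : ℝ) {v : ℝ≥0} (hv : v ≠ 0) :
    ∫⁻ y, (gaussianPDF a v y * gaussianPDF b v y) ^ (1 / 2 : ℝ) =
      ENNReal.ofReal (Real.exp (-((a - b) ^ 2 / (8 * v)))) := by
  simp_rw [gaussianPDF_mul_gaussianPDF_rpow_half a b _ hv]
  rw [lintegral_const_mul _ (measurable_gaussianPDF _ _), lintegral_gaussianPDF_eq_one _ hv,
    mul_one]

section GaussianRegression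

variable {X : Type*} [MeasurableSpace X] {μ : Measure X} {f f₁ f₂ : X → ℝ} {v : ℝ≥0}

noncomputable def gaussianRegressionDensity (f : X → ℝ) (v : ℝ≥0) (z : X × ℝ) : ℝ≥0∞ :=
  gaussianPDF (f z.1) v z.2

theorem measurable_gaussianRegressionDensity (hf : Measurable f) :
    Measurable (gaussianRegressionDensity f v) :=
  measurable_uncurry_gaussianPDF.comp
    ((hf.comp measurable_fst).prodMk (measurable_const.prodMk measurable_snd))

theorem lintegral_gaussianRegressionDensity [IsProbabilityMeasure μ] (hf : Measurable f)
    (hv : v ≠ 0) : ∫⁻ z, gaussianRegressionDensity f v z ∂μ.prod volume = 1 := by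
  rw [lintegral_prod _ (measurable_gaussianRegressionDensity hf).aemeasurable]
  simp [gaussianRegressionDensity, lintegral_gaussianPDF_eq_one _ hv]

theorem hellingerAffinity_gaussianRegressionDensity [SFinite μ] (hf₁ : Measurable f₁)
    (hf₂ : Measurable f₂) (hv : v ≠ 0) :
    hellingerAffinity (μ.prod volume) (gaussianRegressionDensity f₁ v)
        (gaussianRegressionDensity f₂ v) =
      ∫⁻ x, ENNReal.ofReal (Real.exp (-((f₁ x - f₂ x) ^ 2 / (8 * v)))) ∂μ := by
  rw [hellingerAffinity, lintegral_prod
    (fun z => (gaussianRegressionDensity f₁ v z * gaussianRegressionDensity f₂ v z) ^ (1 / 2 : ℝ))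
    (((measurable_gaussianRegressionDensity hf₁).mul
      (measurable_gaussianRegressionDensity hf₂)).pow_const _).aemeasurable]
  exact lintegral_congr fun x => lintegral_gaussianPDF_mul_gaussianPDF_rpow_half (f₁ x) (f₂ x) hv

theorem map_prod_gaussianReal_eq_withDensity [SFinite μ] (hf : Measurable f) (hv : v ≠ 0) :
    (μ.prod (gaussianReal 0 v)).map (fun z => (z.1, f z.1 + z.2)) =
      (μ.prod volume).withDensity (gaussianRegressionDensity f v) := by
  have hT : Measurable fun z : X × ℝ => (z.1, f z.1 + z.2) := by fun_prop
  ext s hs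
  have hslice (x : X) : gaussianReal 0 v (Prod.mk x ⁻¹' ((fun z => (z.1, f z.1 + z.2)) ⁻¹' s)) =
      ∫⁻ y, s.indicator (gaussianRegressionDensity f v) (x, y) := by
    rw [show Prod.mk x ⁻¹' (_ ⁻¹' s) = (f x + ·) ⁻¹' (Prod.mk x ⁻¹' s) from rfl,
      ← Measure.map_apply (measurable_const_add _) (measurable_prodMk_left hs),
      gaussianReal_map_const_add, zero_add, gaussianReal_apply _ hv,
      ← lintegral_indicator (measurable_prodMk_left hs)]
    rfl
  rw [Measure.map_apply hT hs, Measure.prod_apply (hT hs), withDensity_apply _ hs,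
    ← lintegral_indicator hs,
    lintegral_prod _ ((measurable_gaussianRegressionDensity hf).indicator hs).aemeasurable]
  exact lintegral_congr hslice

end GaussianRegression

theorem gaussianRegressionLaw_eq_withDensity {d : ℕ} (μ : Measure (Fin d → ℝ)) [SFinite μ]
    {f : (Fin d → ℝ) → ℝ} (hf : Measurable f) {σ : ℝ} (hσ : σ ≠ 0) :
    gaussianRegressionLaw μ f σ =
      (μ.prod volume).withDensity (gaussianRegressionDensity f ⟨σ ^ 2, sq_nonneg σ⟩) := by
  have hv : (⟨σ ^ 2, sq_nonneg σ⟩ : ℝ≥0) ≠ 0 := by simpa [← NNReal.coe_ne_zero] using hσ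
  exact map_prod_gaussianReal_eq_withDensity hf hv

theorem one_sub_integral_le_toReal_lintegral_exp_neg {α : Type*} [MeasurableSpace α]
    {μ : Measure α} [IsProbabilityMeasure μ] {g : α → ℝ} (hg : Integrable g μ) (hg0 : 0 ≤ g) :
    1 - ∫ x, g x ∂μ ≤ (∫⁻ x, ENNReal.ofReal (Real.exp (-g x)) ∂μ).toReal := by
  have hexp : Integrable (fun x => Real.exp (-g x)) μ := by
    refine (integrable_const (1 : ℝ)).mono' (by fun_prop) (ae_of_all _ fun x => ?_)
    rw [Real.norm_of_nonneg (Real.exp_nonneg _), Real.exp_le_one_iff, neg_nonpos]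
    exact hg0 x
  calc 1 - ∫ x, g x ∂μ = ∫ x, (1 - g x) ∂μ := by
        rw [integral_sub (integrable_const 1) hg, integral_const, probReal_univ, one_smul]
    _ ≤ ∫ x, Real.exp (-g x) ∂μ := integral_mono ((integrable_const 1).sub hg) hexp
        fun x => by linarith [Real.add_one_le_exp (-g x)]
    _ = _ := integral_eq_lintegral_of_nonneg_ae (ae_of_all _ fun x => Real.exp_nonneg _)
        hexp.aestronglyMeasurable

theorem one_sub_pow_two_mul_le {r δ : ℝ} (hr : 1 - δ ≤ r) (n : ℕ) :
    1 - r ^ (2 * n) ≤ 2 * n * δ := by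
  have hbern : 1 + n * (r ^ 2 - 1) ≤ (1 + (r ^ 2 - 1)) ^ n :=
    one_add_mul_le_pow (by linarith [sq_nonneg r]) n
  rw [add_sub_cancel] at hbern
  have hn : (0 : ℝ) ≤ n := n.cast_nonneg
  rw [pow_mul]
  nlinarith [mul_nonneg hn (sq_nonneg (1 - r)), mul_nonneg hn (sub_nonneg.mpr hr)]

theorem Finset.le_card_sdiff_or_le_card_sdiff_s8 {α : Type*} [DecidableEq α] {s t u : Finset α}
    {m : ℕ} (hu : u.card ≤ s.card) (hm : 2 * m ≤ (t \ s).card) :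
    m ≤ (s \ u).card ∨ m ≤ (t \ u).card := by
  have htriangle : (t \ s).card ≤ (t \ u).card + (u \ s).card :=
    (Finset.card_le_card (sdiff_triangle t u s)).trans (Finset.card_union_le _ _)
  have := Finset.card_sdiff_le_card_sdiff_iff.mpr hu
  omega

theorem support_recovery_minimax_gaussian_general {d k m n : ℕ} (σ : ℝ) (hσ : 0 < σ)
    (μ : Measure (Fin d → ℝ)) [IsProbabilityMeasure μ]
    (f₁ f₂ : (Fin d → ℝ) → ℝ) (hf₁ : Measurable f₁) (hf₂ : Measurable f₂)
    (h_int : Integrable (fun x => (f₁ x - f₂ x) ^ 2) μ)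
    (s₁ s₂ : Finset (Fin d)) (h₁ : s₁.card = k)
    (h_sep : 2 * m ≤ min (s₁ \ s₂).card (s₂ \ s₁).card)
    (shat : (Fin n → (Fin d → ℝ) × ℝ) → Finset (Fin d))
    (h_meas : Measurable[_root_.inferInstance, ⊤] shat)
    (h_size : ∀ data, (shat data).card ≤ k) :
    max ((Measure.pi fun _ : Fin n => gaussianRegressionLaw μ f₁ σ)
          {data | m ≤ (s₁ \ shat data).card}).toReal
        ((Measure.pi fun _ : Fin n => gaussianRegressionLaw μ f₂ σ)
          {data | m ≤ (s₂ \ shat data).card}).toReal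
      ≥ (1 / 2 : ℝ) *
        (1 - Real.sqrt ((n / (4 * σ ^ 2)) * ∫ x, (f₁ x - f₂ x) ^ 2 ∂μ)) := by
  have hv : (⟨σ ^ 2, sq_nonneg σ⟩ : ℝ≥0) ≠ 0 := by simpa [← NNReal.coe_ne_zero] using hσ.ne'
  have hmiss (s : Finset (Fin d)) : MeasurableSet {data | m ≤ (s \ shat data).card} :=
    h_meas (t := {t | m ≤ (s \ t).card}) MeasurableSpace.measurableSet_top
  have hcover : {data | m ≤ (s₁ \ shat data).card} ∪ {data | m ≤ (s₂ \ shat data).card} =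
      Set.univ := Set.eq_univ_of_forall fun data =>
    Finset.le_card_sdiff_or_le_card_sdiff_s8 (h₁ ▸ h_size data) (h_sep.trans (min_le_right _ _))
  have hle_cam := one_sub_sqrt_le_pi_withDensity_add (ν := μ.prod volume)
    (measurable_gaussianRegressionDensity hf₁)
    (measurable_gaussianRegressionDensity hf₂) (lintegral_gaussianRegressionDensity hf₁ hv)
    (lintegral_gaussianRegressionDensity hf₂ hv) (hmiss s₁) (hmiss s₂) hcover
  rw [← gaussianRegressionLaw_eq_withDensity μ hf₁ hσ.ne',
    ← gaussianRegressionLaw_eq_withDensity μ hf₂ hσ.ne'] at hle_cam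
  set ρ := hellingerAffinity (μ.prod volume) (gaussianRegressionDensity f₁ ⟨σ ^ 2, sq_nonneg σ⟩)
    (gaussianRegressionDensity f₂ ⟨σ ^ 2, sq_nonneg σ⟩) with hρ_def
  have hρ : 1 - (∫ x, (f₁ x - f₂ x) ^ 2 ∂μ) / (8 * σ ^ 2) ≤ ρ.toReal := by
    rw [hρ_def, hellingerAffinity_gaussianRegressionDensity hf₁ hf₂ hv, ← integral_div]
    exact one_sub_integral_le_toReal_lintegral_exp_neg (h_int.div_const _) fun x => by positivity
  have hbound : 1 - ρ.toReal ^ (2 * n) ≤ n / (4 * σ ^ 2) * ∫ x, (f₁ x - f₂ x) ^ 2 ∂μ :=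
    calc _ ≤ 2 * n * ((∫ x, (f₁ x - f₂ x) ^ 2 ∂μ) / (8 * σ ^ 2)) := one_sub_pow_two_mul_le hρ n
      _ = _ := by field_simp; ring
  rw [ge_iff_le, le_max_iff]
  by_contra! h
  linarith [h.1, h.2, Real.sqrt_le_sqrt hbound]

/-- two-point minimax lower bound for support recovery in
Gaussian-noise regression (instantiation of the paper's Theorem 2). -/
theorem support_recovery_minimax_gaussian {d k m n : ℕ} (σ : ℝ) (hσ : 0 < σ)
    (μ : Measure (Fin d → ℝ)) [IsProbabilityMeasure μ]
    (f₁ f₂ : (Fin d → ℝ) → ℝ) (hf₁ : Measurable f₁) (hf₂ : Measurable f₂)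
    (h_int : Integrable (fun x => (f₁ x - f₂ x) ^ 2) μ)
    (s₁ s₂ : Finset (Fin d)) (h₁ : s₁.card = k) (h₂ : s₂.card = k)
    (h_sep : 2 * m ≤ min (s₁ \ s₂).card (s₂ \ s₁).card)
    (hdep₁ : DependsOnlyOn f₁ s₁) (hdep₂ : DependsOnlyOn f₂ s₂)
    (shat : (Fin n → (Fin d → ℝ) × ℝ) → Finset (Fin d))
    (h_meas : Measurable[_root_.inferInstance, ⊤] shat)
    (h_size : ∀ data, (shat data).card ≤ k) :
    max ((Measure.pi fun _ : Fin n => gaussianRegressionLaw μ f₁ σ)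
          {data | m ≤ (s₁ \ shat data).card}).toReal
        ((Measure.pi fun _ : Fin n => gaussianRegressionLaw μ f₂ σ)
          {data | m ≤ (s₂ \ shat data).card}).toReal
      ≥ (1 / 2 : ℝ) *
        (1 - Real.sqrt ((n / (4 * σ ^ 2)) * ∫ x, (f₁ x - f₂ x) ^ 2 ∂μ)) :=
  support_recovery_minimax_gaussian_general σ hσ μ f₁ f₂ hf₁ hf₂ h_int s₁ s₂ h₁ h_sep shat h_meas
    h_size
end
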